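/- arXiv:1307.3681 — 2 statements merged into one kernel-verified Lean document; each statement's English description precedes it below -/
import Mathlib

section
/- Assume t ≥ 2 and a_1 = 0. Let σ₁ < σ₂ ≤ σ₃ < σ₄ be points of ArchTrop(f) with σ₂ > σ₁ + 2·log(t−1), σ₄ > σ₃ + 2·log(t−1), (σ₁, σ₂) ∩ ArchTrop(f) = ∅, and (σ₃, σ₄) ∩ ArchTrop(f) = ∅. Let m₁ ∈ {1,…,t} be the unique index with a_{m₁}·v + log|c_{m₁}| > a_i·v + log|c_i| for all i ≠ m₁ and all v ∈ (σ₁, σ₂), and let m₂ be the unique index with the analogous property on (σ₃, σ₄). Then f has exactly a_{m₂} − a_{m₁} roots ζ ∈ ℂ, counted with multiplicity, satisfying σ₂ − log(t−1) ≤ log|ζ| ≤ σ₃ + log(t−1). -/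
/-- Evaluation of the univariate polynomial `f(x) = ∑ i, c i * x^{a i}` (with integer
exponents) at `x ∈ ℂ∖{0}`. -/
noncomputable def upoly {t : ℕ} (c : Fin t → ℂ) (a : Fin t → ℤ) (x : ℂ) : ℂ :=
  ∑ i, c i * x ^ a i

/-- `|c_i| e^{a_i v}`, the `i`-th tropical term of `f` at `v ∈ ℝ`. -/
noncomputable def tropTerm1 {t : ℕ} (c : Fin t → ℂ) (a : Fin t → ℤ) (v : ℝ) (i : Fin t) : ℝ :=
  ‖c i‖ * Real.exp ((a i : ℝ) * v)

/-- `ArchTrop(f) ⊆ ℝ`: the set of `v` where the maximum of `|c_i| e^{a_i v}` is attained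
at least twice. -/
noncomputable def ArchTrop1 {t : ℕ} (c : Fin t → ℂ) (a : Fin t → ℤ) : Set ℝ :=
  {v | ∃ i k : Fin t, i ≠ k ∧ (∀ l, tropTerm1 c a v l ≤ tropTerm1 c a v i) ∧
      tropTerm1 c a v i = tropTerm1 c a v k}

attribute [local instance] Classical.propDecidable

/-- `f` as a polynomial in `ℂ[x]` (exponents `a i` are nonnegative when `a_1 = 0` and
`a` is strictly increasing). -/
noncomputable def upolyP {t : ℕ} (c : Fin t → ℂ) (a : Fin t → ℤ) : Polynomial ℂ :=
  ∑ i, Polynomial.C (c i) * Polynomial.X ^ (a i).toNat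

/-!
Take `v` in a gap `(σ, σ')` at distance more than `log (t - 1)` from both ends. For `i ≠ m` the
affine function `(a_m - a_i) v + log |c_m / c_i|` is positive on the gap and, the exponents being
distinct integers, has slope of absolute value at least one; so it exceeds the distance from `v`
to the ends, and each of the `t - 1` other terms is less than `1 / (t - 1)` times the dominant
term `|c_m| e^{a_m v}`. Hence `f` has no roots with `log |z|` in the shrunken gap and, by
Rouché's theorem against `c_m z^{a_m}`, exactly `a_m` roots in the disc of radius `e^v`.
Counting roots between the two gaps gives `a_{m₂} - a_{m₁}`.
-/

open Polynomial Metric Real Set Finset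

section ArgumentPrinciple

open Complex

variable {c : ℂ} {R : ℝ}

theorem circleIntegral.integral_sub_inv_of_notMem_closedBall (hR : 0 < R) {w : ℂ}
    (hw : w ∉ closedBall c R) : (∮ z in C(c, R), (z - w)⁻¹) = 0 := by
  refine DiffContOnCl.circleIntegral_eq_zero hR.le (DifferentiableOn.diffContOnCl ?_)
  rw [closure_ball c hR.ne']
  exact (differentiableOn_id.sub_const w).inv fun z hz =>
    sub_ne_zero.2 (ne_of_mem_of_not_mem hz hw)

theorem continuousOn_one_div_sub_of_notMem {w : ℂ} {s : Set ℂ} (hw : w ∉ s) :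
    ContinuousOn (fun z => 1 / (z - w)) s :=
  continuousOn_const.div (continuousOn_id.sub continuousOn_const) fun _ hz =>
    sub_ne_zero.2 (ne_of_mem_of_not_mem hz hw)

theorem circleIntegral.integral_multiset_sum_one_div_sub (hR : 0 < R) (s : Multiset ℂ)
    (hs : ∀ ζ ∈ s, ζ ∉ sphere c R) :
    (∮ z in C(c, R), (s.map fun ζ => 1 / (z - ζ)).sum) =
      2 * π * I * (s.filter (· ∈ ball c R)).card := by
  induction s using Multiset.induction with
  | empty => simp [circleIntegral]
  | cons w s ih =>
    have hw := hs w (Multiset.mem_cons_self w s)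
    have hs' := fun ζ hζ => hs ζ (Multiset.mem_cons_of_mem hζ)
    have hsum : CircleIntegrable (fun z => (s.map fun ζ => 1 / (z - ζ)).sum) c R :=
      (continuousOn_multiset_sum s fun ζ hζ =>
        continuousOn_one_div_sub_of_notMem (hs' ζ hζ)).circleIntegrable hR.le
    simp only [Multiset.map_cons, Multiset.sum_cons]
    rw [circleIntegral.integral_add
      ((continuousOn_one_div_sub_of_notMem hw).circleIntegrable hR.le) hsum, ih hs',
      Multiset.filter_cons]
    by_cases hwb : w ∈ ball c R
    · simp [hwb, circleIntegral.integral_sub_inv_of_mem_ball hwb]; ring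
    · have : w ∉ closedBall c R := fun h => hwb <|
        (mem_closedBall.1 h).lt_or_eq.resolve_right fun h' => hw (mem_sphere.2 h')
      simp [hwb, circleIntegral.integral_sub_inv_of_notMem_closedBall hR this]

theorem Polynomial.circleIntegral_derivative_div_eq (p : ℂ[X]) (hR : 0 < R)
    (hp : ∀ z ∈ sphere c R, p.eval z ≠ 0) :
    (∮ z in C(c, R), p.derivative.eval z / p.eval z) =
      2 * π * I * (p.roots.filter (· ∈ ball c R)).card := by
  have hp0 : p ≠ 0 := by
    rintro rfl
    obtain ⟨z, hz⟩ := (NormedSpace.sphere_nonempty (x := c)).2 hR.le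
    exact hp z hz eval_zero
  rw [← circleIntegral.integral_multiset_sum_one_div_sub hR p.roots fun ζ hζ hζs =>
    hp ζ hζs ((mem_roots hp0).1 hζ)]
  exact circleIntegral.integral_congr hR.le fun z hz =>
    (IsAlgClosed.splits p).eval_derivative_div_eval_of_ne_zero (hp z hz)

theorem Polynomial.card_roots_filter_mem_ball_eq_of_norm_sub_lt (p q : ℂ[X]) (hR : 0 < R)
    (h : ∀ z ∈ sphere c R, ‖p.eval z - q.eval z‖ < ‖q.eval z‖) :
    (p.roots.filter (· ∈ ball c R)).card = (q.roots.filter (· ∈ ball c R)).card := by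
  have hq : ∀ z ∈ sphere c R, q.eval z ≠ 0 := fun z hz hq0 =>
    (norm_nonneg _).not_gt (by simpa [hq0] using h z hz)
  have hp : ∀ z ∈ sphere c R, p.eval z ≠ 0 := fun z hz hp0 =>
    (h z hz).ne (by simp [hp0])
  have hslit : ∀ z ∈ sphere c R, p.eval z / q.eval z ∈ slitPlane := fun z hz =>
    ball_one_subset_slitPlane <| by
      rw [mem_ball, Complex.dist_eq, div_sub_one (hq z hz), norm_div]
      exact (div_lt_one (norm_pos_iff.2 (hq z hz))).2 (h z hz)
  have hint : ∀ r : ℂ[X], (∀ z ∈ sphere c R, r.eval z ≠ 0) →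
      CircleIntegrable (fun z => r.derivative.eval z / r.eval z) c R := fun r hr =>
    (r.derivative.continuousOn.div r.continuousOn hr).circleIntegrable hR.le
  -- `log (p / q)` is a primitive of `p'/p - q'/q` along the circle, since `p / q` stays in
  -- the slit plane there.
  have hzero :
      (∮ z in C(c, R), p.derivative.eval z / p.eval z - q.derivative.eval z / q.eval z) = 0 := by
    refine circleIntegral.integral_eq_zero_of_hasDerivWithinAt hR.le fun z hz =>
      HasDerivAt.hasDerivWithinAt ?_ (f := fun z => Complex.log (p.eval z / q.eval z))
    refine (((p.hasDerivAt z).div (q.hasDerivAt z) (hq z hz)).clog (hslit z hz)).congr_deriv ?_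
    have := hp z hz
    have := hq z hz
    simp only [Pi.div_apply]
    field_simp
  rw [circleIntegral.integral_sub (hint p hp) (hint q hq), sub_eq_zero,
    p.circleIntegral_derivative_div_eq hR hp, q.circleIntegral_derivative_div_eq hR hq] at hzero
  exact_mod_cast mul_left_cancel₀ (by simp [pi_ne_zero]) hzero

end ArgumentPrinciple

theorem min_sub_le_of_forall_pos_on_Ioo {s b σ σ' v : ℝ} (hs : 1 ≤ |s|) (hσ : σ < σ')
    (h : ∀ w ∈ Ioo σ σ', 0 < s * w + b) (hv : v ∈ Icc σ σ') :
    min (v - σ) (σ' - v) ≤ s * v + b := by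
  have hcl : Icc σ σ' ⊆ {w | 0 ≤ s * w + b} := by
    rw [← closure_Ioo hσ.ne]
    exact closure_minimal (fun w hw => (h w hw).le) (isClosed_le continuous_const (by fun_prop))
  have h₁ : 0 ≤ s * σ + b := hcl (left_mem_Icc.2 hσ.le)
  have h₂ : 0 ≤ s * σ' + b := hcl (right_mem_Icc.2 hσ.le)
  rcases le_abs'.1 hs with hs | hs
  · nlinarith [min_le_right (v - σ) (σ' - v), hv.2]
  · nlinarith [min_le_left (v - σ) (σ' - v), hv.1]

theorem Real.log_natCast_sub_one_nonneg (n : ℕ) : 0 ≤ log ((n : ℝ) - 1) := by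
  rcases n with _ | n
  · simp
  · simpa using log_natCast_nonneg n

theorem Multiset.card_filter_le_and_le_eq_sub {α β : Type*} [LinearOrder β] (s : Multiset α)
    (f : α → β) {x y : β} (hxy : x ≤ y) :
    (s.filter fun z => x ≤ f z ∧ f z ≤ y).card =
      (s.filter fun z => f z ≤ y).card - (s.filter fun z => f z < x).card := by
  have hsplit := congrArg Multiset.card
    (Multiset.filter_add_not (fun z => x ≤ f z) (s.filter fun z => f z ≤ y))
  rw [Multiset.filter_filter, Multiset.filter_filter, Multiset.card_add,
    Multiset.filter_congr (p := fun z => ¬x ≤ f z ∧ f z ≤ y) (q := fun z => f z < x) fun z _ =>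
      ⟨fun h => not_le.1 h.1, fun h => ⟨not_le.2 h, h.le.trans hxy⟩⟩] at hsplit
  omega

section UPoly

variable {t : ℕ} {c : Fin t → ℂ} {a : Fin t → ℤ}

theorem tropTerm1_eq_exp (v : ℝ) {i : Fin t} (hc : c i ≠ 0) :
    tropTerm1 c a v i = exp (a i * v + log ‖c i‖) := by
  rw [tropTerm1, exp_add, exp_log (norm_pos_iff.2 hc), mul_comm]

theorem tropTerm1_le_mul_exp_neg_min (hc : ∀ i, c i ≠ 0) (ha : Function.Injective a)
    {σ σ' v : ℝ} {m : Fin t} (hσ : σ < σ')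
    (hm : ∀ w ∈ Ioo σ σ', ∀ i, i ≠ m → a i * w + log ‖c i‖ < a m * w + log ‖c m‖)
    (hv : v ∈ Icc σ σ') {i : Fin t} (hi : i ≠ m) :
    tropTerm1 c a v i ≤ tropTerm1 c a v m * exp (-min (v - σ) (σ' - v)) := by
  have hs : (1 : ℝ) ≤ |(a m - a i : ℝ)| := by
    exact_mod_cast Int.one_le_abs (sub_ne_zero.2 (ha.ne hi.symm))
  have := min_sub_le_of_forall_pos_on_Ioo hs hσ
    (fun w hw => by linarith [hm w hw i hi]) hv (b := log ‖c m‖ - log ‖c i‖)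
  rw [tropTerm1_eq_exp v (hc i), tropTerm1_eq_exp v (hc m), ← exp_add, exp_le_exp]
  linarith

theorem sum_tropTerm1_erase_lt (hc : ∀ i, c i ≠ 0) (ha : Function.Injective a)
    {σ σ' v : ℝ} {m : Fin t} (hσ : σ < σ')
    (hm : ∀ w ∈ Ioo σ σ', ∀ i, i ≠ m → a i * w + log ‖c i‖ < a m * w + log ‖c m‖)
    (hv : v ∈ Icc σ σ') (hL : log ((t : ℝ) - 1) < min (v - σ) (σ' - v)) :
    ∑ i ∈ univ.erase m, tropTerm1 c a v i < tropTerm1 c a v m := by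
  set d := min (v - σ) (σ' - v)
  have hT : 0 < tropTerm1 c a v m := by rw [tropTerm1_eq_exp v (hc m)]; positivity
  have hcard : ((univ.erase m).card : ℝ) = t - 1 := by
    rw [card_erase_of_mem (mem_univ m), card_univ, Fintype.card_fin, Nat.cast_sub m.pos]
    norm_num
  have hsmall : ((t : ℝ) - 1) * exp (-d) < 1 := by
    calc ((t : ℝ) - 1) * exp (-d) ≤ exp (log ((t : ℝ) - 1)) * exp (-d) := by
          gcongr; exact le_exp_log _
      _ = exp (log ((t : ℝ) - 1) + -d) := (exp_add _ _).symm
      _ < 1 := exp_lt_one_iff.2 (by linarith)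
  calc ∑ i ∈ univ.erase m, tropTerm1 c a v i
      ≤ ∑ _i ∈ univ.erase m, tropTerm1 c a v m * exp (-d) := sum_le_sum fun i hi =>
        tropTerm1_le_mul_exp_neg_min hc ha hσ hm hv (ne_of_mem_erase hi)
    _ = tropTerm1 c a v m * (((t : ℝ) - 1) * exp (-d)) := by
        rw [sum_const, nsmul_eq_mul, hcard]; ring
    _ < tropTerm1 c a v m := by nlinarith

theorem eval_upolyP (z : ℂ) : (upolyP c a).eval z = ∑ i, c i * z ^ (a i).toNat := by
  simp [upolyP, eval_finsetSum]

theorem eval_zero_upolyP (ha : Function.Injective a) (hnn : ∀ i, 0 ≤ a i) {i₀ : Fin t}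
    (h : a i₀ = 0) : (upolyP c a).eval 0 = c i₀ := by
  rw [eval_upolyP, sum_eq_single i₀ (fun i _ hi => ?_) (by simp), h, Int.toNat_zero, pow_zero,
    mul_one]
  have : (a i).toNat ≠ 0 := by have := hnn i; have : a i ≠ 0 := h ▸ ha.ne hi; omega
  simp [zero_pow this]

theorem norm_monomial_eq_tropTerm1 {i : Fin t} (hi : 0 ≤ a i) {v : ℝ} {z : ℂ}
    (hz : ‖z‖ = exp v) : ‖c i * z ^ (a i).toNat‖ = tropTerm1 c a v i := by
  have : ((a i).toNat : ℝ) = a i := by exact_mod_cast Int.toNat_of_nonneg hi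
  rw [norm_mul, norm_pow, hz, ← exp_nat_mul, this, tropTerm1]

theorem norm_eval_upolyP_sub_le (hnn : ∀ i, 0 ≤ a i) {v : ℝ} {z : ℂ} (hz : ‖z‖ = exp v)
    (m : Fin t) :
    ‖(upolyP c a).eval z - c m * z ^ (a m).toNat‖ ≤ ∑ i ∈ univ.erase m, tropTerm1 c a v i := by
  rw [eval_upolyP, ← sum_erase_add _ _ (mem_univ m), add_sub_cancel_right]
  exact (norm_sum_le _ _).trans_eq (sum_congr rfl fun i _ => norm_monomial_eq_tropTerm1 (hnn i) hz)

section Dominant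

variable (hnn : ∀ i, 0 ≤ a i) {v : ℝ} {m : Fin t}
  (hdom : ∑ i ∈ univ.erase m, tropTerm1 c a v i < tropTerm1 c a v m)
include hnn hdom

theorem eval_upolyP_ne_zero_of_dominant {z : ℂ} (hz : ‖z‖ = exp v) :
    (upolyP c a).eval z ≠ 0 := by
  intro h0
  have := norm_eval_upolyP_sub_le (c := c) hnn hz m
  rw [h0, zero_sub, norm_neg, norm_monomial_eq_tropTerm1 (hnn m) hz] at this
  exact (this.trans_lt hdom).false

theorem card_roots_upolyP_filter_norm_lt_exp (hc : c m ≠ 0) :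
    ((upolyP c a).roots.filter (‖·‖ < exp v)).card = (a m).toNat := by
  have := (upolyP c a).card_roots_filter_mem_ball_eq_of_norm_sub_lt
    (C (c m) * X ^ (a m).toNat) (exp_pos v) (c := 0) fun z hz => by
      have hz' : ‖z‖ = exp v := by simpa using hz
      rw [eval_mul, eval_C, eval_pow, eval_X, norm_monomial_eq_tropTerm1 (hnn m) hz']
      exact (norm_eval_upolyP_sub_le hnn hz' m).trans_lt hdom
  have hq : ((C (c m) * X ^ (a m).toNat).roots.filter (· ∈ ball 0 (exp v))).card =
      (a m).toNat := by
    rw [roots_C_mul_X_pow hc, Multiset.nsmul_singleton,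
      Multiset.filter_eq_self.2 fun z hz => ?_, Multiset.card_replicate]
    simp [Multiset.eq_of_mem_replicate hz, exp_pos]
  rw [hq] at this
  simpa using this

end Dominant

theorem card_roots_upolyP_filter_log_norm_of_gap (hc : ∀ i, c i ≠ 0)
    (ha : Function.Injective a) (hnn : ∀ i, 0 ≤ a i) (h0 : (upolyP c a).eval 0 ≠ 0)
    {σ σ' : ℝ} {m : Fin t} (hσ : σ < σ')
    (hm : ∀ w ∈ Ioo σ σ', ∀ i, i ≠ m → a i * w + log ‖c i‖ < a m * w + log ‖c m‖)
    (hgap : σ + 2 * log ((t : ℝ) - 1) < σ') :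
    ((upolyP c a).roots.filter fun z => log ‖z‖ ≤ σ + log ((t : ℝ) - 1)).card = (a m).toNat ∧
      ((upolyP c a).roots.filter fun z => log ‖z‖ < σ' - log ((t : ℝ) - 1)).card =
        (a m).toNat := by
  set L := log ((t : ℝ) - 1)
  have hL : 0 ≤ L := log_natCast_sub_one_nonneg t
  have hdom : ∀ u, σ + L < u → u < σ' - L →
      ∑ i ∈ univ.erase m, tropTerm1 c a u i < tropTerm1 c a u m := fun u h₁ h₂ =>
    sum_tropTerm1_erase_lt hc ha hσ hm ⟨by linarith, by linarith⟩
      (lt_min (by linarith) (by linarith))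
  obtain ⟨v, hv₁, hv₂⟩ : ∃ v, σ + L < v ∧ v < σ' - L :=
    ⟨(σ + σ') / 2, by linarith, by linarith⟩
  have hcount := card_roots_upolyP_filter_norm_lt_exp hnn (hdom v hv₁ hv₂) (hc m)
  have hroot : ∀ z ∈ (upolyP c a).roots,
      (‖z‖ < exp v ↔ log ‖z‖ < v) ∧ (log ‖z‖ ≤ σ + L ∨ σ' - L ≤ log ‖z‖) := by
    intro z hz
    have hz0 : 0 < ‖z‖ := norm_pos_iff.2 (by rintro rfl; exact h0 (mem_roots'.1 hz).2)
    refine ⟨(log_lt_iff_lt_exp hz0).symm, ?_⟩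
    by_contra! h
    exact eval_upolyP_ne_zero_of_dominant hnn (hdom _ h.1 h.2) (exp_log hz0).symm
      (mem_roots'.1 hz).2
  have hle : ((upolyP c a).roots.filter fun z => log ‖z‖ ≤ σ + L) =
      (upolyP c a).roots.filter (‖·‖ < exp v) := Multiset.filter_congr fun z hz => by
    rw [(hroot z hz).1]
    rcases (hroot z hz).2 with h | h <;> constructor <;> intro <;> linarith
  have hlt : ((upolyP c a).roots.filter fun z => log ‖z‖ < σ' - L) =
      (upolyP c a).roots.filter (‖·‖ < exp v) := Multiset.filter_congr fun z hz => by
    rw [(hroot z hz).1]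
    rcases (hroot z hz).2 with h | h <;> constructor <;> intro <;> linarith
  rw [hle, hlt]
  exact ⟨hcount, hcount⟩

end UPoly

/-- Given points `σ₁ < σ₂ ≤ σ₃ < σ₄` of `ArchTrop(f)` with wide empty gaps `(σ₁,σ₂)` and
`(σ₃,σ₄)`, and dominating indices `m₁` on `(σ₁,σ₂)` and `m₂` on `(σ₃,σ₄)`, the number of
roots of `f` (with multiplicity) with `σ₂ - log(t-1) ≤ log|ζ| ≤ σ₃ + log(t-1)` is exactly
`a_{m₂} - a_{m₁}`. -/
theorem stmt14 {t : ℕ} (ht : 2 ≤ t)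
    (c : Fin t → ℂ) (a : Fin t → ℤ) (ha : StrictMono a) (hc : ∀ i, c i ≠ 0)
    (ha0 : a ⟨0, by omega⟩ = 0)
    (σ₁ σ₂ σ₃ σ₄ : ℝ)
    (h12 : σ₁ < σ₂) (h23 : σ₂ ≤ σ₃) (h34 : σ₃ < σ₄)
    (hgap₁ : σ₁ + 2 * Real.log ((t : ℝ) - 1) < σ₂)
    (hgap₂ : σ₃ + 2 * Real.log ((t : ℝ) - 1) < σ₄)
    (m₁ m₂ : Fin t)
    (hm₁ : ∀ v ∈ Set.Ioo σ₁ σ₂, ∀ i, i ≠ m₁ →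
      (a i : ℝ) * v + Real.log (‖c i‖) <
        (a m₁ : ℝ) * v + Real.log (‖c m₁‖))
    (hm₂ : ∀ v ∈ Set.Ioo σ₃ σ₄, ∀ i, i ≠ m₂ →
      (a i : ℝ) * v + Real.log (‖c i‖) <
        (a m₂ : ℝ) * v + Real.log (‖c m₂‖)) :
    ((upolyP c a).roots.filter
        (fun z => σ₂ - Real.log ((t : ℝ) - 1) ≤ Real.log (‖z‖) ∧
          Real.log (‖z‖) ≤ σ₃ + Real.log ((t : ℝ) - 1))).card
      = (a m₂).toNat - (a m₁).toNat := by
  have hnn : ∀ i, 0 ≤ a i := fun i => ha0 ▸ ha.monotone (Fin.mk_le_of_le_val (Nat.zero_le i))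
  have h0 : (upolyP c a).eval 0 ≠ 0 := by
    rw [eval_zero_upolyP ha.injective hnn ha0]
    exact hc _
  have hL := log_natCast_sub_one_nonneg t
  rw [Multiset.card_filter_le_and_le_eq_sub _ (fun z => log ‖z‖) (by linarith),
    (card_roots_upolyP_filter_log_norm_of_gap hc ha.injective hnn h0 h34 hm₂ hgap₂).1,
    (card_roots_upolyP_filter_log_norm_of_gap hc ha.injective hnn h0 h12 hm₁ hgap₁).2]
end

section
/- Assume ArchTrop(f) has exactly 3 elements. Then for every σ ∈ ArchTrop(f) there exists a root ζ ∈ ℂ∖{0} of f with |σ − log|ζ|| ≤ 1 + 3·log(t−1). -/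
open Finset

section Tropical

variable {t : ℕ}

def IsMaxTerm (c : Fin t → ℂ) (a : Fin t → ℤ) (v : ℝ) (j : Fin t) : Prop :=
  ∀ l, tropTerm1 c a v l ≤ tropTerm1 c a v j

def IsDominant (c : Fin t → ℂ) (a : Fin t → ℤ) (v : ℝ) (j : Fin t) : Prop :=
  ∑ l ∈ univ.erase j, tropTerm1 c a v l < tropTerm1 c a v j

variable {c : Fin t → ℂ} {a : Fin t → ℤ} {v w : ℝ} {j k : Fin t}

lemma tropTerm1_nonneg (v : ℝ) (i : Fin t) : 0 ≤ tropTerm1 c a v i := by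
  unfold tropTerm1; positivity

lemma tropTerm1_pos (hc : ∀ i, c i ≠ 0) (v : ℝ) (i : Fin t) : 0 < tropTerm1 c a v i :=
  mul_pos (norm_pos_iff.2 (hc i)) (Real.exp_pos _)

lemma tropTerm1_add (v s : ℝ) (i : Fin t) :
    tropTerm1 c a (v + s) i = tropTerm1 c a v i * Real.exp (a i * s) := by
  simp only [tropTerm1, mul_add, Real.exp_add, mul_assoc]

lemma continuous_tropTerm1 (i : Fin t) : Continuous fun v => tropTerm1 c a v i := by
  unfold tropTerm1; fun_prop

lemma exists_isMaxTerm_lt_of_mem (hv : v ∈ ArchTrop1 c a) :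
    ∃ p q, IsMaxTerm c a v p ∧ IsMaxTerm c a v q ∧ p < q := by
  obtain ⟨i, k, hik, hi, heq⟩ := hv
  have hk : IsMaxTerm c a v k := fun l => heq ▸ hi l
  rcases hik.lt_or_gt with h | h
  exacts [⟨i, k, hi, hk, h⟩, ⟨k, i, hk, hi, h⟩]

lemma exists_isMaxTerm (ht : 0 < t) (v : ℝ) : ∃ j, IsMaxTerm c a v j :=
  have : Nonempty (Fin t) := ⟨⟨0, ht⟩⟩
  Finite.exists_max _

lemma isClosed_setOf_isMaxTerm (j : Fin t) : IsClosed {v | IsMaxTerm c a v j} := by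
  simp only [IsMaxTerm, Set.ofPred_forall]
  exact isClosed_iInter fun l => isClosed_le (continuous_tropTerm1 l) (continuous_tropTerm1 j)

lemma IsMaxTerm.exponent_le (hc : ∀ i, c i ≠ 0) {m : Fin t} (hj : IsMaxTerm c a v j)
    (hm : IsMaxTerm c a w m) (hvw : v < w) : a j ≤ a m := by
  by_contra! hlt
  have hexp : Real.exp (a m * (w - v)) < Real.exp (a j * (w - v)) :=
    Real.exp_lt_exp.2 (mul_lt_mul_of_pos_right (by exact_mod_cast hlt) (sub_pos.2 hvw))
  have h := hm j
  rw [← add_sub_cancel v w, tropTerm1_add, tropTerm1_add] at h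
  exact lt_irrefl _ <| (mul_lt_mul_of_pos_left hexp (tropTerm1_pos (a := a) hc v j)).trans_le <|
    h.trans (mul_le_mul_of_nonneg_right (hj m) (Real.exp_pos _).le)

/-- Compare the `j`-th term with the largest of the others and apply the intermediate value
theorem. -/
lemma exists_mem_archTrop1_Icc (hvw : v ≤ w) (hj : IsMaxTerm c a v j) (hk : IsMaxTerm c a w k)
    (hjk : j ≠ k) : ∃ τ ∈ ArchTrop1 c a, τ ∈ Set.Icc v w := by
  have hne : (univ.erase j).Nonempty := ⟨k, mem_erase.2 ⟨hjk.symm, mem_univ k⟩⟩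
  set g : ℝ → ℝ := fun x => tropTerm1 c a x j - (univ.erase j).sup' hne (tropTerm1 c a x)
  have hg : Continuous g := (continuous_tropTerm1 j).sub <|
    Continuous.finset_sup'_apply hne fun l _ => continuous_tropTerm1 l
  have hgv : 0 ≤ g v := sub_nonneg.2 <| sup'_le _ _ fun l _ => hj l
  have hgw : g w ≤ 0 :=
    sub_nonpos.2 <| (hk j).trans (le_sup' _ (mem_erase.2 ⟨hjk.symm, mem_univ k⟩))
  obtain ⟨τ, hτ, hgτ⟩ := intermediate_value_Icc' hvw hg.continuousOn ⟨hgw, hgv⟩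
  obtain ⟨q, hq, hq_eq⟩ := exists_mem_eq_sup' hne (tropTerm1 c a τ)
  have hmax : IsMaxTerm c a τ j := by
    intro l
    rcases eq_or_ne l j with rfl | hl
    · exact le_rfl
    · exact (le_sup' _ (mem_erase.2 ⟨hl, mem_univ l⟩)).trans (sub_eq_zero.1 hgτ).ge
  refine ⟨τ, ⟨j, q, (ne_of_mem_erase hq).symm, hmax, ?_⟩, hτ⟩
  rw [← hq_eq]
  exact sub_eq_zero.1 hgτ

lemma isMaxTerm_of_forall_notMem_Ioo (ht : 0 < t) {u u' : ℝ}
    (hfree : ∀ τ ∈ ArchTrop1 c a, τ ∉ Set.Ioo u u') (hv : v ∈ Set.Ioo u u')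
    (hj : IsMaxTerm c a v j) {x : ℝ} (hx : x ∈ Set.Icc u u') : IsMaxTerm c a x j := by
  have hsub : Set.Ioo u u' ⊆ {x | IsMaxTerm c a x j} := by
    intro x hx
    obtain ⟨q, hq⟩ := exists_isMaxTerm (c := c) (a := a) ht x
    by_contra hxj
    have hqj : q ≠ j := by rintro rfl; exact hxj hq
    obtain ⟨τ, hτ, hτI⟩ : ∃ τ ∈ ArchTrop1 c a, τ ∈ Set.Icc (min x v) (max x v) := by
      rcases le_total x v with hxv | hvx
      · simpa [hxv] using exists_mem_archTrop1_Icc hxv hq hj hqj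
      · simpa [hvx] using exists_mem_archTrop1_Icc hvx hj hq hqj.symm
    exact hfree τ hτ
      ⟨(lt_min hx.1 hv.1).trans_le hτI.1, hτI.2.trans_lt (max_lt hx.2 hv.2)⟩
  rw [← closure_Ioo (hv.1.trans hv.2).ne] at hx
  exact (isClosed_setOf_isMaxTerm j).closure_subset_iff.2 hsub hx

end Tropical

section Dominance

variable {t : ℕ} {c : Fin t → ℂ} {a : Fin t → ℤ} {v : ℝ} {j : Fin t}

lemma StrictMono.natSub_le_sub {a : Fin t → ℤ} (ha : StrictMono a) {l j : Fin t} (h : l ≤ j) :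
    (((j : ℕ) - l : ℕ) : ℝ) ≤ a j - a l := by
  have key : ∀ d (j : Fin t), (j : ℕ) = l + d → (d : ℤ) ≤ a j - a l := by
    intro d
    induction d with
    | zero => intro j hj; simp [Fin.ext (hj.trans (add_zero _))]
    | succ d ih =>
      intro j hj
      have hd : (l : ℕ) + d < t := by omega
      have h₁ := ih ⟨l + d, hd⟩ rfl
      have h₂ : a ⟨l + d, hd⟩ < a j := ha (Fin.lt_def.2 (by simp; omega))
      push_cast
      omega
  exact_mod_cast key _ j (Nat.add_sub_of_le (Fin.le_def.1 h)).symm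

lemma exp_neg_mul_le_pow {D δ : ℝ} {n : ℕ} (hδ : 0 ≤ δ) (hn : (n : ℝ) ≤ D) :
    Real.exp (-(D * δ)) ≤ Real.exp (-δ) ^ n := by
  rw [← Real.exp_nat_mul]
  exact Real.exp_le_exp.2 (by nlinarith)

/-- `marginWeight x y j l` bounds the `l`-th term relative to the maximal `j`-th one when there
is no point of `ArchTrop1` within `-log x` to the left and `-log y` to the right. -/
def marginWeight (x y : ℝ) (j l : Fin t) : ℝ :=
  if l < j then x ^ ((j : ℕ) - l) else y ^ ((l : ℕ) - j)

lemma tropTerm1_le_mul_exp_of_isMaxTerm (s : ℝ) (h : IsMaxTerm c a (v + s) j) (l : Fin t) :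
    tropTerm1 c a v l ≤ tropTerm1 c a v j * Real.exp ((a j - a l) * s) := by
  have hl := h l
  rw [tropTerm1_add, tropTerm1_add] at hl
  calc tropTerm1 c a v l
      = tropTerm1 c a v l * Real.exp (a l * s) * Real.exp (-(a l * s)) := by
        rw [mul_assoc, ← Real.exp_add, add_neg_cancel, Real.exp_zero, mul_one]
    _ ≤ tropTerm1 c a v j * Real.exp (a j * s) * Real.exp (-(a l * s)) := by gcongr
    _ = tropTerm1 c a v j * Real.exp ((a j - a l) * s) := by
        rw [mul_assoc, ← Real.exp_add]; ring_nf

lemma tropTerm1_le_mul_marginWeight (ha : StrictMono a) (ht : 0 < t) {δm δp : ℝ}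
    (hδm : 0 < δm) (hδp : 0 < δp) (hfree : ∀ τ ∈ ArchTrop1 c a, τ ∉ Set.Ioo (v - δm) (v + δp))
    (hj : IsMaxTerm c a v j) (l : Fin t) :
    tropTerm1 c a v l ≤
      tropTerm1 c a v j * marginWeight (Real.exp (-δm)) (Real.exp (-δp)) j l := by
  have hv : v ∈ Set.Ioo (v - δm) (v + δp) := ⟨by linarith, by linarith⟩
  have hT := tropTerm1_nonneg (c := c) (a := a) v j
  unfold marginWeight
  split_ifs with hlj
  · have hmax := isMaxTerm_of_forall_notMem_Ioo ht hfree hv hj (x := v + -δm)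
      ⟨by linarith, by linarith⟩
    refine (tropTerm1_le_mul_exp_of_isMaxTerm _ hmax l).trans (mul_le_mul_of_nonneg_left ?_ hT)
    rw [show ((a j : ℝ) - a l) * -δm = -((a j - a l) * δm) by ring]
    exact exp_neg_mul_le_pow hδm.le (ha.natSub_le_sub hlj.le)
  · have hmax := isMaxTerm_of_forall_notMem_Ioo ht hfree hv hj (x := v + δp)
      ⟨by linarith, by linarith⟩
    refine (tropTerm1_le_mul_exp_of_isMaxTerm _ hmax l).trans (mul_le_mul_of_nonneg_left ?_ hT)
    rw [show ((a j : ℝ) - a l) * δp = -((a l - a j) * δp) by ring]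
    exact exp_neg_mul_le_pow hδp.le (ha.natSub_le_sub (not_lt.1 hlj))

lemma exists_isDominant (hc : ∀ i, c i ≠ 0) (ha : StrictMono a) (ht : 0 < t) {δm δp : ℝ}
    (hδm : 0 < δm) (hδp : 0 < δp) (hfree : ∀ τ ∈ ArchTrop1 c a, τ ∉ Set.Ioo (v - δm) (v + δp))
    (hnum : ∀ j : Fin t,
      ∑ l ∈ univ.erase j, marginWeight (Real.exp (-δm)) (Real.exp (-δp)) j l < 1) :
    ∃ j, IsDominant c a v j := by
  obtain ⟨j, hj⟩ := exists_isMaxTerm (c := c) (a := a) ht v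
  refine ⟨j, ?_⟩
  calc ∑ l ∈ univ.erase j, tropTerm1 c a v l
      ≤ ∑ l ∈ univ.erase j,
          tropTerm1 c a v j * marginWeight (Real.exp (-δm)) (Real.exp (-δp)) j l :=
        sum_le_sum fun l _ => tropTerm1_le_mul_marginWeight ha ht hδm hδp hfree hj l
    _ < tropTerm1 c a v j := by
        rw [← mul_sum]
        exact mul_lt_of_lt_one_right (tropTerm1_pos hc v j) (hnum j)

lemma IsDominant.isMaxTerm (h : IsDominant c a v j) : IsMaxTerm c a v j := by
  intro l
  rcases eq_or_ne l j with rfl | hl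
  · exact le_rfl
  · exact (single_le_sum (fun i _ => tropTerm1_nonneg v i) (mem_erase.2 ⟨hl, mem_univ l⟩)).trans
      h.le

end Dominance

section MarginSums

variable {t : ℕ}

lemma sum_pow_succ_le_of_injOn {ι : Type*} {x : ℝ} (hx : 0 ≤ x) (hx1 : x < 1) {s : Finset ι}
    {g : ι → ℕ} (hg : Set.InjOn g s) : ∑ i ∈ s, x ^ (g i + 1) ≤ x / (1 - x) := by
  classical
  rw [← sum_image (f := fun n => x ^ (n + 1)) hg]
  have hsum : Summable fun n : ℕ => x ^ (n + 1) := by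
    simpa [pow_succ] using (summable_geometric_of_lt_one hx hx1).mul_right x
  calc ∑ n ∈ s.image g, x ^ (n + 1) ≤ ∑' n : ℕ, x ^ (n + 1) :=
        hsum.sum_le_tsum _ fun _ _ => by positivity
    _ = x / (1 - x) := by
        simp_rw [pow_succ']
        rw [tsum_mul_left, tsum_geometric_of_lt_one hx hx1, div_eq_mul_inv]

lemma sum_erase_marginWeight_lt_one {x y : ℝ} (hx : 0 ≤ x) (hx1 : x < 1) (hy : 0 ≤ y)
    (hy1 : y < 1) (hxy : x / (1 - x) + y / (1 - y) < 1) (j : Fin t) :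
    ∑ l ∈ univ.erase j, marginWeight x y j l < 1 := by
  unfold marginWeight
  rw [sum_ite]
  have hleft : ∑ l ∈ (univ.erase j).filter (· < j), x ^ ((j : ℕ) - l) ≤ x / (1 - x) := by
    rw [sum_congr rfl fun l hl => by
      rw [show (j : ℕ) - l = (j - l - 1) + 1 by
        have := Fin.lt_def.1 (mem_filter.1 hl).2; omega]]
    refine sum_pow_succ_le_of_injOn hx hx1 fun l hl l' hl' h => Fin.ext ?_
    have := Fin.lt_def.1 (mem_filter.1 hl).2
    have := Fin.lt_def.1 (mem_filter.1 hl').2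
    omega
  have hright : ∑ l ∈ (univ.erase j).filter (¬ · < j), y ^ ((l : ℕ) - j) ≤ y / (1 - y) := by
    rw [sum_congr rfl fun l hl => by
      rw [show (l : ℕ) - j = (l - j - 1) + 1 by
        obtain ⟨hl₁, hl₂⟩ := mem_filter.1 hl
        have := Fin.val_ne_of_ne (ne_of_mem_erase hl₁)
        have := Fin.not_lt.1 hl₂
        omega]]
    refine sum_pow_succ_le_of_injOn hy hy1 fun l hl l' hl' h => Fin.ext ?_
    obtain ⟨hl₁, hl₂⟩ := mem_filter.1 hl
    obtain ⟨hl₁', hl₂'⟩ := mem_filter.1 hl'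
    have := Fin.val_ne_of_ne (ne_of_mem_erase hl₁)
    have := Fin.val_ne_of_ne (ne_of_mem_erase hl₁')
    have := Fin.not_lt.1 hl₂
    have := Fin.not_lt.1 hl₂'
    omega
  linarith

/-- The geometric bound `sum_erase_marginWeight_lt_one` needs `x < 1/3`; summing the four terms
exactly allows `x` up to `√2 - 1`. -/
lemma sum_erase_marginWeight_fin_four_lt_one {x : ℝ} (hx : 0 ≤ x) (hx2 : (1 + x) ^ 2 < 2)
    (j : Fin 4) : ∑ l ∈ univ.erase j, marginWeight x x j l < 1 := by
  rw [sum_erase_eq_sub (mem_univ j), Fin.sum_univ_four]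
  fin_cases j <;> simp [marginWeight] <;> nlinarith

end MarginSums

section Gaps

open scoped Pointwise

/-- Walking left from `σ` through `S` in steps shorter than `2δ`, one either meets a gap of length
`2δ` (take `v` its midpoint) or passes `min S` (take `v = min S - ε`). -/
lemma exists_gap_left {S : Set ℝ} (hS : S.Finite) {δ ε : ℝ} (hδ : 0 < δ) (hε : 0 < ε) (σ : ℝ) :
    ∃ v, σ - (2 * δ * {τ ∈ S | τ < σ}.ncard + ε) ≤ v ∧ v < σ ∧
      ((∀ τ ∈ S, v + ε ≤ τ) ∨ ∀ τ ∈ S, τ ∉ Set.Ioo (v - δ) (v + δ)) := by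
  induction hk : {τ ∈ S | τ < σ}.ncard using Nat.strong_induction_on generalizing σ with
  | _ k ih =>
  by_cases hnear : ∃ τ ∈ S, σ - 2 * δ < τ ∧ τ < σ
  · obtain ⟨τ, hτS, hτ₁, hτ₂⟩ := hnear
    have hlt : {x ∈ S | x < τ}.ncard < k := hk ▸ Set.ncard_lt_ncard
      ⟨fun x hx => ⟨hx.1, hx.2.trans hτ₂⟩, fun h => lt_irrefl τ (h ⟨hτS, hτ₂⟩).2⟩
      (hS.subset fun x hx => hx.1)
    obtain ⟨v, hv₁, hv₂, hv⟩ := ih _ hlt τ rfl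
    have : ({x ∈ S | x < τ}.ncard : ℝ) + 1 ≤ k := by exact_mod_cast hlt
    exact ⟨v, by nlinarith, hv₂.trans hτ₂, hv⟩
  push Not at hnear
  rcases Nat.eq_zero_or_pos k with rfl | hkpos
  · have hbelow : ∀ τ ∈ S, σ ≤ τ := fun τ hτ => not_lt.1 fun h =>
      ((Set.ncard_eq_zero (hS.subset fun x hx => hx.1)).1 hk).subset ⟨hτ, h⟩
    exact ⟨σ - ε, by simp, by linarith, Or.inl fun τ hτ => by linarith [hbelow τ hτ]⟩
  · have : (1 : ℝ) ≤ k := by exact_mod_cast hkpos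
    refine ⟨σ - δ, by nlinarith, by linarith, Or.inr fun τ hτ hτI => ?_⟩
    have := hnear τ hτ (by linarith [hτI.1])
    linarith [hτI.2]

lemma exists_gap_right {S : Set ℝ} (hS : S.Finite) {δ ε : ℝ} (hδ : 0 < δ) (hε : 0 < ε)
    (σ : ℝ) : ∃ v, σ < v ∧ v ≤ σ + (2 * δ * {τ ∈ S | σ < τ}.ncard + ε) ∧
      ((∀ τ ∈ S, τ ≤ v - ε) ∨ ∀ τ ∈ S, τ ∉ Set.Ioo (v - δ) (v + δ)) := by
  obtain ⟨v, hv₁, hv₂, hv⟩ := exists_gap_left hS.neg hδ hε (-σ)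
  have hneg : {τ ∈ -S | τ < -σ} = -{τ ∈ S | σ < τ} := by
    ext τ; simp [lt_neg]
  rw [hneg, Set.ncard_neg] at hv₁
  refine ⟨-v, by linarith, by linarith, hv.imp (fun h τ hτ => ?_) (fun h τ hτ hτI => ?_)⟩
  · linarith [h (-τ) (by simpa using hτ)]
  · exact h (-τ) (by simpa using hτ) ⟨by linarith [hτI.2], by linarith [hτI.1]⟩

lemma ncard_sep_le_ncard_sub_one {S : Set ℝ} (hS : S.Finite) {σ : ℝ} (hσ : σ ∈ S)
    {P : ℝ → Prop} (hP : ¬ P σ) : {τ ∈ S | P τ}.ncard ≤ S.ncard - 1 := by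
  rw [← Set.ncard_sdiff_singleton_of_mem hσ]
  exact Set.ncard_le_ncard (fun τ hτ => ⟨hτ.1, fun h => hP (h ▸ hτ.2)⟩) hS.sdiff

end Gaps

section ContinuousLog

open Complex

def IsContinuousLog (L F : ℝ → ℂ) : Prop :=
  Continuous L ∧ ∀ θ, exp (L θ) = F θ

namespace IsContinuousLog

variable {L L₁ L₂ F F₁ F₂ : ℝ → ℂ}

lemma add (h₁ : IsContinuousLog L₁ F₁) (h₂ : IsContinuousLog L₂ F₂) :
    IsContinuousLog (fun θ => L₁ θ + L₂ θ) (fun θ => F₁ θ * F₂ θ) :=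
  ⟨h₁.1.add h₂.1, fun θ => by rw [exp_add, h₁.2, h₂.2]⟩

lemma const_add (h : IsContinuousLog L F) {z : ℂ} (hz : z ≠ 0) :
    IsContinuousLog (fun θ => log z + L θ) (fun θ => z * F θ) :=
  ⟨continuous_const.add h.1, fun θ => by rw [exp_add, exp_log hz, h.2]⟩

lemma natCast_mul (h : IsContinuousLog L F) (n : ℕ) :
    IsContinuousLog (fun θ => n * L θ) (fun θ => F θ ^ n) :=
  ⟨continuous_const.mul h.1, fun θ => by rw [exp_nat_mul, h.2]⟩

lemma multiset_sum {ι : Type*} {L F : ι → ℝ → ℂ} (s : Multiset ι)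
    (h : ∀ i ∈ s, IsContinuousLog (L i) (F i)) :
    IsContinuousLog (fun θ => (s.map (L · θ)).sum) (fun θ => (s.map (F · θ)).prod) := by
  induction s using Multiset.induction_on with
  | empty => exact ⟨continuous_const, fun θ => by simp⟩
  | cons i s ih =>
    simpa only [Multiset.map_cons, Multiset.sum_cons, Multiset.prod_cons] using
      (h i (Multiset.mem_cons_self i s)).add (ih fun k hk => h k (Multiset.mem_cons_of_mem hk))

/-- Two continuous logarithms of the same function differ by a constant, since `exp` is a
covering map onto `ℂ \ {0}`. -/
lemma sub_eq_sub (h₁ : IsContinuousLog L₁ F) (h₂ : IsContinuousLog L₂ F) (x y : ℝ) :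
    L₁ y - L₁ x = L₂ y - L₂ x := by
  have hconst := isCoveringMap_exp.const_of_comp (h₁.1.sub h₂.1) (fun θ θ' => by
    have : ∀ θ, exp (L₁ θ - L₂ θ) = 1 := fun θ => by
      rw [exp_sub, h₁.2, ← h₂.2, div_self (exp_ne_zero _)]
    exact Subtype.ext ((this θ).trans (this θ').symm)) y x
  simp only [Pi.sub_apply] at hconst
  linear_combination hconst

end IsContinuousLog

lemma isContinuousLog_log_one_add {w : ℝ → ℂ} (hw : Continuous w) (h : ∀ θ, ‖w θ‖ < 1) :
    IsContinuousLog (fun θ => log (1 + w θ)) (fun θ => 1 + w θ) :=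
  ⟨(continuous_const.add hw).clog fun θ => mem_slitPlane_of_norm_lt_one (h θ),
    fun θ => exp_log (slitPlane_ne_zero (mem_slitPlane_of_norm_lt_one (h θ)))⟩

lemma isContinuousLog_circleMap {ρ : ℝ} (hρ : 0 < ρ) :
    IsContinuousLog (fun θ => Real.log ρ + θ * I) (circleMap 0 ρ) :=
  ⟨by fun_prop, fun θ => by
    rw [exp_add, ← ofReal_exp, Real.exp_log hρ, circleMap, zero_add]⟩

lemma circleMap_two_pi (ρ : ℝ) : circleMap 0 ρ (2 * Real.pi) = circleMap 0 ρ 0 := by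
  simpa using periodic_circleMap 0 ρ 0

lemma exists_isContinuousLog_circleMap_sub {ρ : ℝ} (hρ : 0 < ρ) {ζ : ℂ} (hζ : ‖ζ‖ ≠ ρ) :
    ∃ L, IsContinuousLog L (fun θ => circleMap 0 ρ θ - ζ) ∧
      L (2 * Real.pi) - L 0 = if ‖ζ‖ < ρ then 2 * Real.pi * I else 0 := by
  have hz : ∀ θ, circleMap 0 ρ θ ≠ 0 := fun θ => circleMap_ne_center hρ.ne'
  have hnorm : ∀ θ, ‖circleMap 0 ρ θ‖ = ρ := fun θ => by
    rw [norm_circleMap_zero, abs_of_pos hρ]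
  rcases hζ.lt_or_gt with hlt | hgt
  · -- `z - ζ = z * (1 - ζ / z)`
    have hw : ∀ θ, ‖-ζ / circleMap 0 ρ θ‖ < 1 := fun θ => by
      rw [norm_div, norm_neg, hnorm, div_lt_one hρ]; exact hlt
    have hL := (isContinuousLog_circleMap hρ).add
      (isContinuousLog_log_one_add (w := fun θ => -ζ / circleMap 0 ρ θ)
        (continuous_const.div (continuous_circleMap 0 ρ) hz) hw)
    refine ⟨_, ⟨hL.1, fun θ => by rw [hL.2]; field_simp [hz θ]; ring⟩, ?_⟩
    simp only [if_pos hlt, circleMap_two_pi]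
    push_cast
    ring
  · -- `z - ζ = -ζ * (1 - z / ζ)`
    have hζ0 : ζ ≠ 0 := norm_pos_iff.1 (hρ.trans hgt)
    have hw : ∀ θ, ‖-circleMap 0 ρ θ / ζ‖ < 1 := fun θ => by
      rw [norm_div, norm_neg, hnorm, div_lt_one (hρ.trans hgt)]; exact hgt
    have hL := (isContinuousLog_log_one_add (w := fun θ => -circleMap 0 ρ θ / ζ)
      ((continuous_circleMap 0 ρ).neg.div_const ζ) hw).const_add
      (neg_ne_zero.2 hζ0)
    refine ⟨_, ⟨hL.1, fun θ => by rw [hL.2]; field_simp; ring⟩, ?_⟩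
    simp only [if_neg hgt.not_gt, circleMap_two_pi]
    ring

end ContinuousLog

section RootCount

open Complex Polynomial

lemma Multiset.sum_map_ite_eq_card_filter_nsmul {α M : Type*} [AddCommMonoid M]
    (s : Multiset α) (P : α → Prop) [DecidablePred P] (x : M) :
    (s.map fun a => if P a then x else 0).sum = (s.filter P).card • x := by
  induction s using Multiset.induction_on with
  | empty => simp
  | cons a s ih => by_cases h : P a <;> simp [h, ih, add_nsmul, add_comm]

lemma Polynomial.exists_isContinuousLog_eval_circleMap {p : ℂ[X]} (hp : p ≠ 0) {ρ : ℝ}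
    (hρ : 0 < ρ) (hroots : ∀ ζ ∈ p.roots, ‖ζ‖ ≠ ρ) :
    ∃ L, IsContinuousLog L (fun θ => p.eval (circleMap 0 ρ θ)) ∧
      L (2 * Real.pi) - L 0 = (p.roots.filter (‖·‖ < ρ)).card * (2 * Real.pi * I) := by
  classical
  choose! L hL hLinc using fun ζ hζ => exists_isContinuousLog_circleMap_sub hρ (hroots ζ hζ)
  have hfac : ∀ w, p.eval w = p.leadingCoeff * (p.roots.map (w - ·)).prod := fun w => by
    conv_lhs => rw [← C_leadingCoeff_mul_prod_multiset_X_sub_C (p := p)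
      IsAlgClosed.card_roots_eq_natDegree]
    simp [eval_multiset_prod, Multiset.map_map]
  have hA := (IsContinuousLog.multiset_sum p.roots hL).const_add (leadingCoeff_ne_zero.2 hp)
  refine ⟨_, ⟨hA.1, fun θ => (hA.2 θ).trans (hfac _).symm⟩, ?_⟩
  simp only [add_sub_add_left_eq_sub, ← Multiset.sum_map_sub]
  rw [Multiset.map_congr rfl hLinc, Multiset.sum_map_ite_eq_card_filter_nsmul, nsmul_eq_mul]

noncomputable def Polynomial.tailRatio (p : ℂ[X]) (s : Finset ℕ) (n : ℕ) (w : ℂ) : ℂ :=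
  (∑ m ∈ s.erase n, p.coeff m * w ^ m) / (p.coeff n * w ^ n)

section Dominant

variable {p : ℂ[X]} {s : Finset ℕ} {ρ : ℝ} {n : ℕ} (hρ : 0 < ρ)
  (hdom : ∑ m ∈ s.erase n, ‖p.coeff m‖ * ρ ^ m < ‖p.coeff n‖ * ρ ^ n)
include hρ hdom

lemma Polynomial.coeff_ne_zero_of_dominant : p.coeff n ≠ 0 := by
  intro h
  rw [h, norm_zero, zero_mul] at hdom
  exact hdom.not_ge (sum_nonneg fun _ _ => by positivity)

lemma Polynomial.norm_tailRatio_lt_one {w : ℂ} (hw : ‖w‖ = ρ) : ‖p.tailRatio s n w‖ < 1 := by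
  have hpos : 0 < ‖p.coeff n‖ * ρ ^ n := lt_of_le_of_lt (by positivity) hdom
  rw [tailRatio, norm_div, div_lt_one (by rwa [norm_mul, norm_pow, hw]), norm_mul, norm_pow, hw]
  refine (norm_sum_le _ _).trans_lt ?_
  simpa only [norm_mul, norm_pow, hw] using hdom

lemma Polynomial.eval_eq_mul_one_add_tailRatio (hs : p.support ⊆ s) {w : ℂ} (hw : w ≠ 0) :
    p.eval w = p.coeff n * w ^ n * (1 + p.tailRatio s n w) := by
  have hcn := coeff_ne_zero_of_dominant hρ hdom
  rw [eval_eq_sum, sum_def, sum_subset hs fun m _ hm => by simp [notMem_support_iff.1 hm],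
    ← add_sum_erase s _ (hs (mem_support_iff.2 hcn)), tailRatio, mul_add, mul_one,
    mul_div_cancel₀ _ (mul_ne_zero hcn (pow_ne_zero _ hw))]

/-- `1 + tailRatio` stays in the unit disc around `1`, so only `zⁿ` winds around `0`. -/
lemma Polynomial.exists_isContinuousLog_eval_circleMap_of_dominant (hs : p.support ⊆ s) :
    ∃ L, IsContinuousLog L (fun θ => p.eval (circleMap 0 ρ θ)) ∧
      L (2 * Real.pi) - L 0 = n * (2 * Real.pi * I) := by
  have hcn := coeff_ne_zero_of_dominant hρ hdom
  have hz : ∀ θ, circleMap 0 ρ θ ≠ 0 := fun θ => circleMap_ne_center hρ.ne'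
  have hU : Continuous fun θ => p.tailRatio s n (circleMap 0 ρ θ) :=
    (continuous_finsetSum _ fun m _ => by fun_prop).div (by fun_prop)
      fun θ => mul_ne_zero hcn (pow_ne_zero _ (hz θ))
  have hL := (((isContinuousLog_circleMap hρ).natCast_mul n).add
    (isContinuousLog_log_one_add hU fun θ => norm_tailRatio_lt_one hρ hdom
      (by rw [norm_circleMap_zero, abs_of_pos hρ]))).const_add hcn
  refine ⟨_, ⟨hL.1, fun θ => (hL.2 θ).trans <| by
    beta_reduce; rw [eval_eq_mul_one_add_tailRatio hρ hdom hs (hz θ), mul_assoc]⟩, ?_⟩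
  simp only [circleMap_two_pi]
  push_cast
  ring

/-- Rouché's theorem against the monomial `cₙ zⁿ`: compare the two continuous logarithms of
`p` along the circle of radius `ρ`. -/
theorem Polynomial.card_roots_norm_lt_of_dominant (hs : p.support ⊆ s) :
    (p.roots.filter (‖·‖ < ρ)).card = n := by
  have hcn := coeff_ne_zero_of_dominant hρ hdom
  have hroots : ∀ ζ ∈ p.roots, ‖ζ‖ ≠ ρ := fun ζ hζ hζρ => by
    have hζ0 : ζ ≠ 0 := norm_pos_iff.1 (hζρ ▸ hρ)
    have := eval_eq_mul_one_add_tailRatio hρ hdom hs hζ0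
    rw [(isRoot_of_mem_roots hζ).eq_zero] at this
    exact mul_ne_zero (mul_ne_zero hcn (pow_ne_zero _ hζ0))
      (slitPlane_ne_zero (mem_slitPlane_of_norm_lt_one (norm_tailRatio_lt_one hρ hdom hζρ)))
      this.symm
  obtain ⟨L₁, hL₁, hinc₁⟩ := exists_isContinuousLog_eval_circleMap
    (fun h => hcn (by simp [h])) hρ hroots
  obtain ⟨L₂, hL₂, hinc₂⟩ := exists_isContinuousLog_eval_circleMap_of_dominant hρ hdom hs
  have key := hL₁.sub_eq_sub hL₂ 0 (2 * Real.pi)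
  rw [hinc₁, hinc₂] at key
  have h2πI : (2 * Real.pi * I : ℂ) ≠ 0 := by simp [Real.pi_ne_zero, I_ne_zero]
  exact_mod_cast mul_right_cancel₀ h2πI key

end Dominant

end RootCount

section ShiftedPoly

open Polynomial

variable {t : ℕ} {c : Fin t → ℂ} {a : Fin t → ℤ} {a₀ : ℤ}

/-- `x ^ (-a₀) * f x` as a genuine polynomial, for `a₀ ≤ a i`. -/
noncomputable def shiftedPoly (c : Fin t → ℂ) (a : Fin t → ℤ) (a₀ : ℤ) : ℂ[X] :=
  ∑ i, C (c i) * X ^ (a i - a₀).toNat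

lemma upoly_eq_zpow_mul_eval_shiftedPoly (h₀ : ∀ i, a₀ ≤ a i) {w : ℂ} (hw : w ≠ 0) :
    upoly c a w = w ^ a₀ * (shiftedPoly c a a₀).eval w := by
  simp only [upoly, shiftedPoly, eval_finsetSum, eval_mul, eval_C, eval_pow, eval_X, mul_sum]
  refine sum_congr rfl fun i _ => ?_
  rw [← zpow_natCast, Int.toNat_of_nonneg (sub_nonneg.2 (h₀ i)), mul_left_comm, ← zpow_add₀ hw,
    add_sub_cancel]

lemma injective_toNat_sub (ha : Function.Injective a) (h₀ : ∀ i, a₀ ≤ a i) :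
    Function.Injective fun i => (a i - a₀).toNat := fun i l h => by
  have := h₀ i; have := h₀ l
  exact ha (by simp only at h; omega)

lemma coeff_shiftedPoly (ha : Function.Injective a) (h₀ : ∀ i, a₀ ≤ a i) (i : Fin t) :
    (shiftedPoly c a a₀).coeff (a i - a₀).toNat = c i := by
  simp only [shiftedPoly, finsetSum_coeff, coeff_C_mul_X_pow,
    (injective_toNat_sub ha h₀).eq_iff, sum_ite_eq, mem_univ, if_true]

lemma support_shiftedPoly_subset :
    (shiftedPoly c a a₀).support ⊆ univ.image fun i => (a i - a₀).toNat := by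
  intro m hm
  by_contra hnot
  refine mem_support_iff.1 hm ?_
  simp only [shiftedPoly, finsetSum_coeff, coeff_C_mul_X_pow]
  exact sum_eq_zero fun i _ => if_neg fun h => hnot (mem_image.2 ⟨i, mem_univ i, h.symm⟩)

lemma card_roots_shiftedPoly_norm_lt (ha : Function.Injective a) (h₀ : ∀ i, a₀ ≤ a i) {v : ℝ}
    {j : Fin t} (hd : IsDominant c a v j) :
    ((shiftedPoly c a a₀).roots.filter (‖·‖ < Real.exp v)).card = (a j - a₀).toNat := by
  classical
  refine card_roots_norm_lt_of_dominant (Real.exp_pos v) ?_ support_shiftedPoly_subset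
  have hterm : ∀ l, tropTerm1 c a v l =
      ‖(shiftedPoly c a a₀).coeff (a l - a₀).toNat‖ * Real.exp v ^ (a l - a₀).toNat *
        Real.exp (a₀ * v) := fun l => by
    have hcast : ((a l - a₀).toNat : ℝ) = a l - a₀ := by
      rw [← Int.cast_natCast, Int.toNat_of_nonneg (sub_nonneg.2 (h₀ l)), Int.cast_sub]
    rw [coeff_shiftedPoly ha h₀, tropTerm1, ← Real.exp_nat_mul, mul_assoc, ← Real.exp_add,
      hcast]
    ring_nf
  rw [← image_erase (injective_toNat_sub ha h₀), sum_image (injective_toNat_sub ha h₀).injOn]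
  unfold IsDominant at hd
  simp only [hterm, ← sum_mul] at hd
  exact lt_of_mul_lt_mul_right hd (Real.exp_pos _).le

end ShiftedPoly

lemma Multiset.exists_mem_Ico_of_card_filter_lt {α β : Type*} [LinearOrder β] (s : Multiset α)
    (f : α → β) {x y : β} (h : (s.filter (f · < x)).card < (s.filter (f · < y)).card) :
    ∃ z ∈ s, x ≤ f z ∧ f z < y := by
  by_contra! hs
  refine h.not_ge (Multiset.card_le_card ?_)
  rw [Multiset.filter_congr (q := fun z => f z < y ∧ f z < x) fun z hz =>
    ⟨fun hy => ⟨hy, not_le.1 fun hx => (hs z hz hx).not_gt hy⟩, And.left⟩]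
  exact Multiset.monotone_filter_right s fun _ => And.right

section Roots

variable {t : ℕ} {c : Fin t → ℂ} {a : Fin t → ℤ}

lemma exists_root_of_isDominant (ha : StrictMono a) {v₁ v₂ : ℝ} {j₁ j₂ : Fin t}
    (hd₁ : IsDominant c a v₁ j₁) (hd₂ : IsDominant c a v₂ j₂) (hj : a j₁ < a j₂) :
    ∃ ζ : ℂ, ζ ≠ 0 ∧ upoly c a ζ = 0 ∧ v₁ ≤ Real.log ‖ζ‖ ∧ Real.log ‖ζ‖ < v₂ := by
  have : NeZero t := ⟨by rintro rfl; exact j₁.elim0⟩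
  have h₀ : ∀ i, a 0 ≤ a i := fun i => ha.monotone (Fin.zero_le i)
  have hcount : ((shiftedPoly c a (a 0)).roots.filter (‖·‖ < Real.exp v₁)).card <
      ((shiftedPoly c a (a 0)).roots.filter (‖·‖ < Real.exp v₂)).card := by
    rw [card_roots_shiftedPoly_norm_lt ha.injective h₀ hd₁,
      card_roots_shiftedPoly_norm_lt ha.injective h₀ hd₂]
    have := h₀ j₁
    omega
  obtain ⟨ζ, hζ, hζ₁, hζ₂⟩ := Multiset.exists_mem_Ico_of_card_filter_lt _ _ hcount
  have hζpos : 0 < ‖ζ‖ := (Real.exp_pos v₁).trans_le hζ₁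
  have hζ0 : ζ ≠ 0 := norm_pos_iff.1 hζpos
  refine ⟨ζ, hζ0, ?_, (Real.le_log_iff_exp_le hζpos).2 hζ₁, (Real.log_lt_iff_lt_exp hζpos).2 hζ₂⟩
  rw [upoly_eq_zpow_mul_eval_shiftedPoly h₀ hζ0, (Polynomial.isRoot_of_mem_roots hζ).eq_zero,
    mul_zero]

end Roots

section Main

variable {t : ℕ} {c : Fin t → ℂ} {a : Fin t → ℤ}

/-- Choosing at each point of `ArchTrop1` the larger of two tied indices gives a strictly
increasing map into `{1, …, t - 1}`. -/
theorem ncard_archTrop1_le (hc : ∀ i, c i ≠ 0) (ha : StrictMono a) :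
    (ArchTrop1 c a).ncard ≤ t - 1 := by
  rcases Nat.eq_zero_or_pos t with rfl | ht
  · simp [ArchTrop1]
  have : Nonempty (Fin t) := ⟨⟨0, ht⟩⟩
  have hpair : ∀ σ ∈ ArchTrop1 c a, ∃ p q, IsMaxTerm c a σ p ∧ IsMaxTerm c a σ q ∧ p < q :=
    fun σ hσ => exists_isMaxTerm_lt_of_mem hσ
  choose! p q hp hq hpq using hpair
  have hmono : ∀ σ ∈ ArchTrop1 c a, ∀ σ' ∈ ArchTrop1 c a, σ < σ' → q σ < q σ' :=
    fun σ hσ σ' hσ' h => ha.lt_iff_lt.1 <|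
      ((hq σ hσ).exponent_le hc (hp σ' hσ') h).trans_lt (ha (hpq σ' hσ'))
  calc (ArchTrop1 c a).ncard ≤ (Set.Ioo 0 t).ncard := by
        refine Set.ncard_le_ncard_of_injOn (fun σ => (q σ : ℕ))
          (fun σ hσ => ⟨(Nat.zero_le _).trans_lt (hpq σ hσ), (q σ).2⟩) ?_ (Set.finite_Ioo 0 t)
        intro σ hσ σ' hσ' h
        by_contra hne
        rcases lt_or_gt_of_ne hne with hlt | hlt
        · exact (hmono σ hσ σ' hσ' hlt).ne (Fin.ext h)
        · exact (hmono σ' hσ' σ hσ hlt).ne (Fin.ext h).symm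
    _ = t - 1 := by
        rw [← Finset.coe_Ioo, Set.ncard_coe_finset, Nat.card_Ioo, Nat.sub_zero]

lemma exists_isDominant_of_gap (hc : ∀ i, c i ≠ 0) (ha : StrictMono a) (ht : 0 < t) {r : ℝ}
    (hr : 1 < r) (hnum : ∀ j : Fin t, ∑ l ∈ univ.erase j, marginWeight r⁻¹ r⁻¹ j l < 1) {v : ℝ}
    (hv : (∀ τ ∈ ArchTrop1 c a, τ ≤ v - Real.log 2.1) ∨
      (∀ τ ∈ ArchTrop1 c a, v + Real.log 2.1 ≤ τ) ∨
      ∀ τ ∈ ArchTrop1 c a, τ ∉ Set.Ioo (v - Real.log r) (v + Real.log r)) :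
    ∃ j, IsDominant c a v j := by
  have hexp : ∀ x : ℝ, 0 < x → Real.exp (-Real.log x) = x⁻¹ := fun x hx => by
    rw [Real.exp_neg, Real.exp_log hx]
  have hnum' : ∀ x y : ℝ, 1 < x → 1 < y → x⁻¹ / (1 - x⁻¹) + y⁻¹ / (1 - y⁻¹) < 1 →
      ∀ j : Fin t, ∑ l ∈ univ.erase j,
        marginWeight (Real.exp (-Real.log x)) (Real.exp (-Real.log y)) j l < 1 :=
    fun x y hx hy h => by
      rw [hexp x (by linarith), hexp y (by linarith)]
      exact sum_erase_marginWeight_lt_one (by positivity) (inv_lt_one_of_one_lt₀ hx)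
        (by positivity) (inv_lt_one_of_one_lt₀ hy) h
  -- beyond the extreme points of `ArchTrop1` the far margin is arbitrary; `log 100` will do
  rcases hv with hv | hv | hv
  · exact exists_isDominant hc ha ht (Real.log_pos (by norm_num : (1 : ℝ) < 2.1))
      (Real.log_pos (by norm_num : (1 : ℝ) < 100)) (fun τ hτ hτI => (hv τ hτ).not_gt hτI.1)
      (hnum' _ _ (by norm_num) (by norm_num) (by norm_num))
  · exact exists_isDominant hc ha ht (Real.log_pos (by norm_num : (1 : ℝ) < 100))
      (Real.log_pos (by norm_num : (1 : ℝ) < 2.1)) (fun τ hτ hτI => (hv τ hτ).not_gt hτI.2)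
      (hnum' _ _ (by norm_num) (by norm_num) (by norm_num))
  · exact exists_isDominant hc ha ht (Real.log_pos hr) (Real.log_pos hr) hv
      (by rw [hexp r (by linarith)]; exact hnum)

theorem exists_root_near_of_mem_archTrop1 (hc : ∀ i, c i ≠ 0) (ha : StrictMono a)
    (hfin : (ArchTrop1 c a).Finite) {r : ℝ} (hr : 1 < r)
    (hnum : ∀ j : Fin t, ∑ l ∈ univ.erase j, marginWeight r⁻¹ r⁻¹ j l < 1)
    {σ : ℝ} (hσ : σ ∈ ArchTrop1 c a) :
    ∃ ζ : ℂ, ζ ≠ 0 ∧ upoly c a ζ = 0 ∧ |σ - Real.log ‖ζ‖| ≤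
      2 * Real.log r * ((ArchTrop1 c a).ncard - 1 : ℕ) + Real.log 2.1 := by
  have ht : 0 < t := by obtain ⟨i, -⟩ := hσ; exact i.pos
  have hlogr := Real.log_pos hr
  have hε := Real.log_pos (by norm_num : (1 : ℝ) < 2.1)
  obtain ⟨v₁, hv₁, hv₁σ, hgap₁⟩ := exists_gap_left hfin hlogr hε σ
  obtain ⟨v₂, hσv₂, hv₂, hgap₂⟩ := exists_gap_right hfin hlogr hε σ
  obtain ⟨j₁, hd₁⟩ := exists_isDominant_of_gap hc ha ht hr hnum (Or.inr hgap₁)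
  obtain ⟨j₂, hd₂⟩ := exists_isDominant_of_gap hc ha ht hr hnum (hgap₂.imp_right Or.inr)
  obtain ⟨p, q, hp, hq, hpq⟩ := exists_isMaxTerm_lt_of_mem hσ
  have hj : a j₁ < a j₂ := (hd₁.isMaxTerm.exponent_le hc hp hv₁σ).trans_lt <|
    (ha hpq).trans_le (hq.exponent_le hc hd₂.isMaxTerm hσv₂)
  obtain ⟨ζ, hζ0, hζ, hζ₁, hζ₂⟩ := exists_root_of_isDominant ha hd₁ hd₂ hj
  have hk₁ := ncard_sep_le_ncard_sub_one hfin hσ (P := (· < σ)) (lt_irrefl σ)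
  have hk₂ := ncard_sep_le_ncard_sub_one hfin hσ (P := (σ < ·)) (lt_irrefl σ)
  have hb : ∀ k ≤ (ArchTrop1 c a).ncard - 1,
      2 * Real.log r * k ≤ 2 * Real.log r * ((ArchTrop1 c a).ncard - 1 : ℕ) :=
    fun k hk => by gcongr
  exact ⟨ζ, hζ0, hζ, abs_le.2 ⟨by linarith [hb _ hk₂], by linarith [hb _ hk₁]⟩⟩

lemma four_mul_log_add_log_le {r n : ℝ} (hr : 0 < r) (hn : 0 < n)
    (h : r ^ 4 * 2.1 ≤ 2.7182818283 * n ^ 3) :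
    2 * Real.log r * 2 + Real.log 2.1 ≤ 1 + 3 * Real.log n := by
  have := Real.log_le_log (by positivity)
    (h.trans (mul_le_mul_of_nonneg_right Real.exp_one_gt_d9.le (by positivity)))
  rw [Real.log_mul (by positivity) (by norm_num), Real.log_mul (Real.exp_pos 1).ne' (by positivity),
    Real.log_pow, Real.log_pow, Real.log_exp] at this
  push_cast at this
  linarith

end Main

/-- If `ArchTrop(f)` has exactly 3 points, then every `σ ∈ ArchTrop(f)` is within distance
`1 + 3·log(t-1)` of `log|ζ|` for some nonzero root `ζ` of `f`. -/
theorem stmt17 {t : ℕ}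
    (c : Fin t → ℂ) (a : Fin t → ℤ) (ha : StrictMono a) (hc : ∀ i, c i ≠ 0)
    (hcard : (ArchTrop1 c a).ncard = 3) :
    ∀ σ ∈ ArchTrop1 c a, ∃ ζ : ℂ, ζ ≠ 0 ∧ upoly c a ζ = 0 ∧
      |σ - Real.log (‖ζ‖)| ≤ 1 + 3 * Real.log ((t : ℝ) - 1) := by
  intro σ hσ
  have hfin : (ArchTrop1 c a).Finite := Set.finite_of_ncard_ne_zero (by omega)
  have ht : 4 ≤ t := by have := ncard_archTrop1_le hc ha; omega
  have h2 : (((ArchTrop1 c a).ncard - 1 : ℕ) : ℝ) = 2 := by rw [hcard]; norm_num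
  rcases ht.eq_or_lt with rfl | ht
  · obtain ⟨ζ, hζ0, hζ, hdist⟩ := exists_root_near_of_mem_archTrop1 hc ha hfin (r := 2.42)
      (by norm_num) (sum_erase_marginWeight_fin_four_lt_one (by norm_num) (by norm_num)) hσ
    refine ⟨ζ, hζ0, hζ, hdist.trans ?_⟩
    rw [h2, show ((4 : ℕ) : ℝ) - 1 = 3 by norm_num]
    exact four_mul_log_add_log_le (by norm_num) (by norm_num) (by norm_num)
  · obtain ⟨ζ, hζ0, hζ, hdist⟩ := exists_root_near_of_mem_archTrop1 hc ha hfin (r := 3.01)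
      (by norm_num) (sum_erase_marginWeight_lt_one (by norm_num) (by norm_num) (by norm_num)
        (by norm_num) (by norm_num)) hσ
    refine ⟨ζ, hζ0, hζ, hdist.trans ?_⟩
    have hn : (4 : ℝ) ≤ t - 1 := by
      have : (5 : ℝ) ≤ t := by exact_mod_cast ht
      linarith
    rw [h2]
    exact four_mul_log_add_log_le (by norm_num) (by linarith)
      (by nlinarith [pow_le_pow_left₀ (by norm_num) hn 3])
end
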